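/- No one-way deterministic one-counter automaton (1D1CA) over the alphabet {a,b,c,d,e} recognizes the language L = (complement of EQ* within {a,b}*) ∪ EQ³, i.e., there is no 1D1CA whose set of accepted strings among {a,b,c,d,e}* equals L. -/

import Mathlib

/-- Input symbols extended with the left (`cent`) and right (`dollar`) end-markers. -/
inductive TSym (α : Type) : Type
  | cent : TSym α
  | letter : α → TSym α
  | dollar : TSym α

/-- The tape content `¢ w $` for an input word `w`. -/
def tagged {α : Type} (w : List α) : List (TSym α) :=
  TSym.cent :: (w.map TSym.letter ++ [TSym.dollar])

/-- A one-way deterministic one-counter automaton. -/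
structure OneD1CA (α : Type) where
  Q : Type
  [fintypeQ : Fintype Q]
  [decQ : DecidableEq Q]
  q0 : Q
  acc : Set Q
  m : ℕ
  δ : Q → TSym α → Bool → Q × ℤ
  bound : ∀ q σ z, |(δ q σ z).2| ≤ (m : ℤ)

attribute [instance] OneD1CA.fintypeQ OneD1CA.decQ

namespace OneD1CA

variable {α : Type} (M : OneD1CA α)

/-- One computation step on a configuration (state, counter value). -/
def step (p : M.Q × ℤ) (σ : TSym α) : M.Q × ℤ :=
  ((M.δ p.1 σ (decide (p.2 = 0))).1, p.2 + (M.δ p.1 σ (decide (p.2 = 0))).2)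

/-- Configuration reached from the initial configuration after reading a list of tape symbols. -/
def confAfter (l : List (TSym α)) : M.Q × ℤ :=
  l.foldl M.step (M.q0, 0)

/-- The automaton accepts `w` iff the state after reading `¢ w $` is accepting. -/
def accepts (w : List α) : Prop :=
  (M.confAfter (tagged w)).1 ∈ M.acc

/-- The automaton recognizes the language `L` if it accepts exactly the members of `L`. -/
def recognizes (L : Set (List α)) : Prop :=
  ∀ w : List α, M.accepts w ↔ w ∈ L

end OneD1CA

/-- The alphabet `{a, b, c, d, e}`. -/
inductive Γ5 : Type
  | a : Γ5
  | b : Γ5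
  | c : Γ5
  | d : Γ5
  | e : Γ5
deriving DecidableEq

/-- The language `EQ = { a^n b^n : n > 0 }` over `{a,b,c,d,e}`. -/
def EQab : Language Γ5 :=
  {w | ∃ n : ℕ, 0 < n ∧ w = List.replicate n Γ5.a ++ List.replicate n Γ5.b}

/-- The Kleene closure `EQ*`. -/
def EQabStar : Language Γ5 := KStar.kstar EQab

/-- The complement of `EQ*` within `{a,b}*`. -/
def coEQstar : Set (List Γ5) :=
  {w | (∀ x ∈ w, x = Γ5.a ∨ x = Γ5.b) ∧ w ∉ EQabStar}

/-- The language `EQ³ = { c^n d^n e^n : n ≥ 0 }`. -/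
def EQ3 : Set (List Γ5) :=
  {w | ∃ n : ℕ, w = List.replicate n Γ5.c ++ List.replicate n Γ5.d ++ List.replicate n Γ5.e}

/-- The language `L = (complement of EQ* within {a,b}*) ∪ EQ³`. -/
def LangL : Set (List Γ5) := coEQstar ∪ EQ3

/-!
After reading a prefix of length `ℓ`, a one-counter automaton with counter increments bounded by
`m` is in one of at most `|Q| (2m + 1)(ℓ + 1)` configurations, and words leading to the same
configuration have the same left quotient. So the number of pairwise inequivalent (in the sense of
Myhill–Nerode) words of length at most `ℓ` grows linearly in `ℓ`. But the quadratically many words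
`c^(a+j) d^j` with `a, j ≤ N` have pairwise distinct left quotients with respect to `L`: the suffix
`d^a e^(a+j)` completes `c^(a+j) d^j` to a word of `EQ³`, and no other of these words to a word
of `L`.
-/

open List

namespace OneD1CA

variable {α : Type} (M : OneD1CA α)

def prefixConf (u : List α) : M.Q × ℤ :=
  M.confAfter (TSym.cent :: u.map TSym.letter)

theorem abs_foldl_step_le (κ : M.Q × ℤ) (l : List (TSym α)) :
    |(l.foldl M.step κ).2| ≤ |κ.2| + M.m * l.length := by
  induction l generalizing κ with
  | nil => simp
  | cons σ l ih =>
    have hσ : |(M.step κ σ).2| ≤ |κ.2| + M.m := by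
      unfold step
      linarith [abs_add_le κ.2 (M.δ κ.1 σ (κ.2 = 0)).2, M.bound κ.1 σ (κ.2 = 0)]
    simp only [foldl_cons, length_cons, Nat.cast_succ]
    linarith [ih (M.step κ σ)]

theorem abs_prefixConf_le (u : List α) : |(M.prefixConf u).2| ≤ M.m * (u.length + 1) := by
  simpa [prefixConf, confAfter, add_comm] using
    M.abs_foldl_step_le (M.q0, 0) (TSym.cent :: u.map TSym.letter)

theorem accepts_append_iff (u v : List α) :
    M.accepts (u ++ v) ↔ ((tagged v).tail.foldl M.step (M.prefixConf u)).1 ∈ M.acc := by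
  simp [accepts, prefixConf, confAfter, tagged]

theorem preimage_append_eq_of_prefixConf_eq {L : Set (List α)} (hM : M.recognizes L)
    {u u' : List α} (h : M.prefixConf u = M.prefixConf u') :
    (u ++ ·) ⁻¹' L = (u' ++ ·) ⁻¹' L := by
  ext v
  rw [Set.mem_preimage, Set.mem_preimage, ← hM, ← hM, accepts_append_iff, accepts_append_iff, h]

theorem card_le_of_injOn_preimage_append {L : Set (List α)} (hM : M.recognizes L) {ι : Type}
    (s : Finset ι) (u : ι → List α) (ℓ : ℕ) (hlen : ∀ i ∈ s, (u i).length ≤ ℓ)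
    (hinj : Set.InjOn (fun i => (u i ++ ·) ⁻¹' L) s) :
    s.card ≤ Fintype.card M.Q * (2 * M.m + 1) * (ℓ + 1) := by
  obtain ⟨B, hB⟩ : ∃ B : ℕ, B = M.m * (ℓ + 1) := ⟨_, rfl⟩
  have hmaps : ∀ i ∈ s, M.prefixConf (u i) ∈ Finset.univ ×ˢ Finset.Icc (-(B : ℤ)) B := by
    intro i hi
    have hconf : |(M.prefixConf (u i)).2| ≤ B :=
      (M.abs_prefixConf_le _).trans (by rw [hB]; push_cast; gcongr; exact_mod_cast hlen i hi)
    simpa [abs_le] using hconf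
  have hcard := Finset.card_le_card_of_injOn _ hmaps
    (fun i hi i' hi' h => hinj hi hi' (M.preimage_append_eq_of_prefixConf_eq hM h))
  rw [Finset.card_product, Finset.card_univ, Int.card_Icc,
    show ((B : ℤ) + 1 - -(B : ℤ)).toNat = 2 * B + 1 by omega, hB] at hcard
  calc s.card ≤ Fintype.card M.Q * (2 * (M.m * (ℓ + 1)) + 1) := hcard
    _ ≤ Fintype.card M.Q * (2 * M.m + 1) * (ℓ + 1) := by rw [mul_assoc]; gcongr; nlinarith

end OneD1CA

theorem count_cde_replicate (i j k : ℕ) :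
    (count Γ5.c (replicate i Γ5.c ++ replicate j Γ5.d ++ replicate k Γ5.e),
      count Γ5.d (replicate i Γ5.c ++ replicate j Γ5.d ++ replicate k Γ5.e),
      count Γ5.e (replicate i Γ5.c ++ replicate j Γ5.d ++ replicate k Γ5.e)) = (i, j, k) := by
  simp [count_replicate]

theorem mem_LangL_iff (i j k : ℕ) :
    replicate i Γ5.c ++ replicate j Γ5.d ++ replicate k Γ5.e ∈ LangL ↔ j = i ∧ k = i := by
  refine ⟨fun hw => ?_, by rintro ⟨rfl, rfl⟩; exact Or.inr ⟨_, rfl⟩⟩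
  have hcounts := count_cde_replicate i j k
  rcases hw with ⟨hab, -⟩ | ⟨n, hn⟩
  · have hzero : ∀ x, x ≠ Γ5.a → x ≠ Γ5.b →
        count x (replicate i Γ5.c ++ replicate j Γ5.d ++ replicate k Γ5.e) = 0 :=
      fun x ha hb => count_eq_zero.2 fun hx => (hab x hx).elim ha hb
    rw [hzero Γ5.c (by decide) (by decide), hzero Γ5.d (by decide) (by decide),
      hzero Γ5.e (by decide) (by decide)] at hcounts
    simp only [Prod.mk.injEq] at hcounts
    omega
  · rw [hn, count_cde_replicate] at hcounts
    simp only [Prod.mk.injEq] at hcounts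
    omega

theorem preimage_append_LangL_injective :
    Function.Injective fun p : ℕ × ℕ =>
      (replicate (p.1 + p.2) Γ5.c ++ replicate p.2 Γ5.d ++ ·) ⁻¹' LangL := by
  rintro ⟨a, j⟩ ⟨a', j'⟩ h
  simp only at h
  have hmem : replicate a Γ5.d ++ replicate (a + j) Γ5.e ∈
      (replicate (a' + j') Γ5.c ++ replicate j' Γ5.d ++ ·) ⁻¹' LangL := by
    rw [← h, Set.mem_preimage, ← append_assoc, append_assoc (replicate _ Γ5.c), ← replicate_add,
      add_comm j a]
    exact (mem_LangL_iff _ _ _).2 ⟨rfl, rfl⟩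
  rw [Set.mem_preimage, ← append_assoc, append_assoc (replicate _ Γ5.c), ← replicate_add,
    mem_LangL_iff] at hmem
  simp only [Prod.mk.injEq]
  omega

/-- no 1D1CA recognizes `L = (complement of EQ* within {a,b}*) ∪ EQ³`. -/
theorem stmt16 : ¬ ∃ M : OneD1CA Γ5, M.recognizes LangL := by
  rintro ⟨M, hM⟩
  set C := Fintype.card M.Q * (2 * M.m + 1)
  set s := Finset.range (3 * C + 1) ×ˢ Finset.range (3 * C + 1)
  have hlen : ∀ p ∈ s, (replicate (p.1 + p.2) Γ5.c ++ replicate p.2 Γ5.d).length ≤ 9 * C := by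
    intro p hp
    simp only [s, Finset.mem_product, Finset.mem_range] at hp
    simp only [length_append, length_replicate]
    omega
  have hcard := M.card_le_of_injOn_preimage_append hM s _ (9 * C) hlen
    preimage_append_LangL_injective.injOn
  rw [Finset.card_product, Finset.card_range] at hcard
  change (3 * C + 1) * (3 * C + 1) ≤ C * (9 * C + 1) at hcard
  nlinarith
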